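/- Let Q be a (conservative) rate matrix and A : Set ι. Then for every real t ≥ 0, every x0 : ι, and every C : Set ι, ∑ y ∈ C, (Matrix.exp ℝ (t • Q)) x0 y − ∑ y ∈ C ∩ A, (Matrix.exp ℝ (t • Q_A)) x0 y ≤ 1 − ∑ y ∈ A, (Matrix.exp ℝ (t • Q_A)) x0 y, with equality when C = Set.univ; hence the supremum over all C : Set ι of the left-hand side equals 1 − ∑ y ∈ A, (Matrix.exp ℝ (t • Q_A)) x0 y. (Finite-state form of the error formula and error bound in Theorem 2.5(ii)–(iii) of the paper: the total variation distance between the law and its FSP approximation, padded with zeros outside A, equals one minus the mass of the approximation.) -/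

import Mathlib

/-- Mathlib's exponential, specialized to real matrices (`Matrix.exp ℝ`). -/
noncomputable def Matrix.exp (𝕂 : Type*) [Field 𝕂] {ι : Type*} [Fintype ι] [DecidableEq ι]
    [Algebra 𝕂 ℝ] (A : Matrix ι ι ℝ) : Matrix ι ι ℝ :=
  (NormedSpace.expSeries 𝕂 (Matrix ι ι ℝ)).sum A

open Classical in
/-- The truncation `Q_A` of `Q` to `A`: every state outside `A` is made absorbing. -/
noncomputable def Matrix.truncation {ι : Type*} (Q : Matrix ι ι ℝ) (A : Set ι) :
    Matrix ι ι ℝ :=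
  Matrix.of fun x y => if x ∈ A then Q x y else 0

/-!
A Metzler matrix becomes entrywise nonnegative after the shift `M ↦ M + c • 1`, which only
rescales `exp M` by `Real.exp c`; hence all the exponentials involved are entrywise nonnegative,
and zero row sums make each row of `exp (t • Q)` a probability vector. The same shift reduces
`exp (t • Q_A) x y ≤ exp (t • Q) x y` for `y ∈ A` to a termwise comparison of exponential series:
a path weighted by `(t • Q_A + c • 1) ^ n` that ends in `A` has never left `A`, and on rows in `A`
the two shifted matrices agree. The error formula then holds pointwise in `y`.
-/

open NormedSpace
open scoped Nat

theorem exp_mul_eq_self_of_mul_eq_zero {𝔸 : Type*} [NormedRing 𝔸] [NormedAlgebra ℚ 𝔸]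
    [CompleteSpace 𝔸] {a b : 𝔸} (h : a * b = 0) : exp a * b = b := by
  have hterm : ∀ n ≠ 0, ((n ! : ℚ)⁻¹ • a ^ n) * b = 0 := fun n hn => by
    obtain ⟨k, rfl⟩ := Nat.exists_eq_succ_of_ne_zero hn
    rw [pow_succ, smul_mul_assoc, mul_assoc, h, mul_zero, smul_zero]
  simpa using ((exp_series_hasSum_exp' (𝕂 := ℚ) a).mul_right b).unique (hasSum_single 0 hterm)

namespace Matrix

variable {ι : Type*}

def IsMetzler (M : Matrix ι ι ℝ) : Prop :=
  ∀ x y, x ≠ y → 0 ≤ M x y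

theorem IsMetzler.smul {M : Matrix ι ι ℝ} (hM : M.IsMetzler) {t : ℝ} (ht : 0 ≤ t) :
    (t • M).IsMetzler :=
  fun x y hxy => mul_nonneg ht (hM x y hxy)

open Classical in
theorem truncation_apply (Q : Matrix ι ι ℝ) (A : Set ι) (x y : ι) :
    Q.truncation A x y = if x ∈ A then Q x y else 0 :=
  rfl

theorem smul_truncation (t : ℝ) (Q : Matrix ι ι ℝ) (A : Set ι) :
    t • Q.truncation A = (t • Q).truncation A := by
  ext x y
  by_cases hx : x ∈ A <;> simp [truncation_apply, hx]

variable [Fintype ι] [DecidableEq ι]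

theorem exp_eq_normedSpace_exp (M : Matrix ι ι ℝ) : Matrix.exp ℝ M = NormedSpace.exp M :=
  congr_fun (exp_eq_expSeries_sum ℝ).symm M

section LinftyOpNorm

attribute [local instance] Matrix.linftyOpNormedAddCommGroup Matrix.linftyOpNormedRing
  Matrix.linftyOpNormedAlgebra

theorem hasSum_exp_apply (M : Matrix ι ι ℝ) (x y : ι) :
    HasSum (fun n : ℕ => (n ! : ℝ)⁻¹ * (M ^ n) x y) (NormedSpace.exp M x y) :=
  Pi.hasSum.mp (Pi.hasSum.mp (exp_series_hasSum_exp' (𝕂 := ℝ) M) x) y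

theorem sum_exp_apply_eq_one {M : Matrix ι ι ℝ} (h : ∀ x, ∑ y, M x y = 0) (x : ι) :
    ∑ y, NormedSpace.exp M x y = 1 := by
  let J : Matrix ι ι ℝ := of fun _ _ => 1
  have hMJ : M * J = 0 := by
    ext x y
    simp [J, mul_apply, h]
  have hexpJ : NormedSpace.exp M * J = J := exp_mul_eq_self_of_mul_eq_zero hMJ
  simpa [J, mul_apply] using congr_fun₂ hexpJ x x

end LinftyOpNorm

theorem exp_add_smul_one (M : Matrix ι ι ℝ) (c : ℝ) :
    NormedSpace.exp (M + c • 1) = Real.exp c • NormedSpace.exp M := by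
  have hc : NormedSpace.exp (fun _ : ι => c) = fun _ => Real.exp c := by
    ext
    rw [Pi.coe_exp, Real.exp_eq_exp_ℝ]
  rw [exp_add_of_commute _ _ ((Commute.one_right M).smul_right c), smul_one_eq_diagonal,
    exp_diagonal, hc, ← smul_one_eq_diagonal, Matrix.mul_smul, mul_one]

theorem exp_apply_nonneg_of_nonneg {M : Matrix ι ι ℝ} (hM : ∀ x y, 0 ≤ M x y) (x y : ι) :
    0 ≤ NormedSpace.exp M x y :=
  (hasSum_exp_apply M x y).nonneg fun n => mul_nonneg (by positivity) (pow_apply_nonneg hM n x y)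

theorem pow_apply_le_pow_apply {M N : Matrix ι ι ℝ} {S : Set ι}
    (hM : ∀ x y, 0 ≤ M x y) (hN : ∀ x y, 0 ≤ N x y)
    (hle : ∀ x, ∀ y ∈ S, M x y ≤ N x y) (hzero : ∀ x ∉ S, ∀ y ∈ S, M x y = 0) (n : ℕ) :
    ∀ x, ∀ y ∈ S, (M ^ n) x y ≤ (N ^ n) x y := by
  induction n with
  | zero => exact fun _ _ _ => le_rfl
  | succ n ih =>
    intro x y hy
    rw [pow_succ, pow_succ, mul_apply, mul_apply]
    refine Finset.sum_le_sum fun k _ => ?_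
    by_cases hk : k ∈ S
    · exact mul_le_mul (ih x k hk) (hle k y hy) (hM k y)
        ((pow_apply_nonneg hM n x k).trans (ih x k hk))
    · rw [hzero k hk y hy, mul_zero]
      exact mul_nonneg (pow_apply_nonneg hN n x k) (hN k y)

theorem exp_apply_le_exp_apply {M N : Matrix ι ι ℝ} {S : Set ι}
    (hM : ∀ x y, 0 ≤ M x y) (hN : ∀ x y, 0 ≤ N x y)
    (hle : ∀ x, ∀ y ∈ S, M x y ≤ N x y) (hzero : ∀ x ∉ S, ∀ y ∈ S, M x y = 0)
    (x : ι) {y : ι} (hy : y ∈ S) :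
    NormedSpace.exp M x y ≤ NormedSpace.exp N x y :=
  hasSum_le (fun n => mul_le_mul_of_nonneg_left
      (pow_apply_le_pow_apply hM hN hle hzero n x y hy) (by positivity))
    (hasSum_exp_apply M x y) (hasSum_exp_apply N x y)

namespace IsMetzler

variable {M : Matrix ι ι ℝ}

theorem exists_nonneg_add_smul_one_nonneg (hM : M.IsMetzler) :
    ∃ c : ℝ, 0 ≤ c ∧ ∀ x y, 0 ≤ (M + c • 1) x y := by
  refine ⟨∑ z, |M z z|, Finset.sum_nonneg fun z _ => abs_nonneg _, fun x y => ?_⟩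
  rcases eq_or_ne x y with rfl | hxy
  · have hdiag := Finset.single_le_sum (f := fun z => |M z z|) (fun z _ => abs_nonneg _)
      (Finset.mem_univ x)
    simp only [add_apply, smul_apply, one_apply_eq, smul_eq_mul, mul_one]
    linarith [neg_abs_le (M x x)]
  · simpa [one_apply_ne hxy] using hM x y hxy

theorem exp_apply_nonneg (hM : M.IsMetzler) (x y : ι) : 0 ≤ NormedSpace.exp M x y := by
  obtain ⟨c, -, hc⟩ := hM.exists_nonneg_add_smul_one_nonneg
  have hshift := exp_apply_nonneg_of_nonneg hc x y
  rw [exp_add_smul_one, smul_apply, smul_eq_mul] at hshift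
  exact (mul_nonneg_iff_of_pos_left (Real.exp_pos c)).mp hshift

theorem exp_truncation_apply_le (hM : M.IsMetzler) (A : Set ι) (x : ι) {y : ι} (hy : y ∈ A) :
    NormedSpace.exp (M.truncation A) x y ≤ NormedSpace.exp M x y := by
  obtain ⟨c, hc0, hc⟩ := hM.exists_nonneg_add_smul_one_nonneg
  have hT : ∀ x y, 0 ≤ (M.truncation A + c • 1) x y := fun x y => by
    by_cases hx : x ∈ A
    · simpa [truncation_apply, hx] using hc x y
    · simpa [truncation_apply, hx, one_apply] using ite_nonneg hc0 le_rfl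
  have hout : ∀ x ∉ A, ∀ y ∈ A, (M.truncation A + c • 1) x y = 0 := fun x hx y hy => by
    simp [truncation_apply, hx, one_apply_ne (ne_of_mem_of_not_mem hy hx).symm]
  have hle : ∀ x, ∀ y ∈ A, (M.truncation A + c • 1) x y ≤ (M + c • 1) x y := fun x y hy => by
    by_cases hx : x ∈ A
    · simp [truncation_apply, hx]
    · exact (hout x hx y hy).trans_le (hc x y)
  have key := exp_apply_le_exp_apply hT hc hle hout x hy
  rw [exp_add_smul_one, exp_add_smul_one, smul_apply, smul_apply, smul_eq_mul,
    smul_eq_mul] at key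
  exact le_of_mul_le_mul_left key (Real.exp_pos c)

end IsMetzler

end Matrix

section FiniteSums

variable {ι : Type*} [Fintype ι] {p e : ι → ℝ} {A : Set ι}

theorem finsum_mem_sub_finsum_mem_inter_le (hp : ∀ y, 0 ≤ p y) (hep : ∀ y ∈ A, e y ≤ p y)
    (C : Set ι) : ∑ᶠ y ∈ C, p y - ∑ᶠ y ∈ C ∩ A, e y ≤ ∑ y, p y - ∑ᶠ y ∈ A, e y := by
  simp only [finsum_eq_sum_of_fintype, ← Finset.sum_sub_distrib]
  refine Finset.sum_le_sum fun y _ => ?_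
  by_cases hC : y ∈ C <;> by_cases hA : y ∈ A <;> simp [hC, hA, hp y, hep y]

theorem ciSup_finsum_mem_sub_finsum_mem_inter (hp : ∀ y, 0 ≤ p y) (hep : ∀ y ∈ A, e y ≤ p y) :
    ⨆ C : Set ι, (∑ᶠ y ∈ C, p y - ∑ᶠ y ∈ C ∩ A, e y) = ∑ y, p y - ∑ᶠ y ∈ A, e y := by
  refine le_antisymm (ciSup_le (finsum_mem_sub_finsum_mem_inter_le hp hep)) ?_
  refine le_ciSup_of_le (Set.finite_range _).bddAbove Set.univ ?_
  simp [finsum_eq_sum_of_fintype]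

end FiniteSums

theorem matrix_fsp_error_formula_general {ι : Type*} [Fintype ι] [DecidableEq ι]
    (Q : Matrix ι ι ℝ) (hMetzler : ∀ x y, x ≠ y → Q x y ≥ 0)
    (hrow : ∀ x, ∑ y, Q x y = 0) (A : Set ι) :
    ∀ t : ℝ, 0 ≤ t → ∀ x0 : ι,
      (∀ C : Set ι,
        (∑ᶠ y ∈ C, Matrix.exp ℝ (t • Q) x0 y) -
            (∑ᶠ y ∈ C ∩ A, Matrix.exp ℝ (t • Q.truncation A) x0 y) ≤
          1 - ∑ᶠ y ∈ A, Matrix.exp ℝ (t • Q.truncation A) x0 y) ∧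
      ((∑ᶠ y ∈ (Set.univ : Set ι), Matrix.exp ℝ (t • Q) x0 y) -
          (∑ᶠ y ∈ ((Set.univ : Set ι) ∩ A), Matrix.exp ℝ (t • Q.truncation A) x0 y) =
        1 - ∑ᶠ y ∈ A, Matrix.exp ℝ (t • Q.truncation A) x0 y) ∧
      ((⨆ C : Set ι,
          ((∑ᶠ y ∈ C, Matrix.exp ℝ (t • Q) x0 y) -
            (∑ᶠ y ∈ C ∩ A, Matrix.exp ℝ (t • Q.truncation A) x0 y))) =
        1 - ∑ᶠ y ∈ A, Matrix.exp ℝ (t • Q.truncation A) x0 y) := by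
  intro t ht x0
  have htQ : (t • Q).IsMetzler := Matrix.IsMetzler.smul hMetzler ht
  have hnonneg : ∀ y, 0 ≤ Matrix.exp ℝ (t • Q) x0 y := fun y => by
    rw [Matrix.exp_eq_normedSpace_exp]
    exact htQ.exp_apply_nonneg x0 y
  have hsum : ∑ y, Matrix.exp ℝ (t • Q) x0 y = 1 := by
    simp_rw [Matrix.exp_eq_normedSpace_exp]
    exact Matrix.sum_exp_apply_eq_one (fun x => by simp [← Finset.mul_sum, hrow]) x0
  have hle : ∀ y ∈ A, Matrix.exp ℝ (t • Q.truncation A) x0 y ≤ Matrix.exp ℝ (t • Q) x0 y :=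
    fun y hy => by
      rw [Matrix.exp_eq_normedSpace_exp, Matrix.exp_eq_normedSpace_exp, Matrix.smul_truncation]
      exact htQ.exp_truncation_apply_le A x0 hy
  refine ⟨fun C => hsum ▸ finsum_mem_sub_finsum_mem_inter_le hnonneg hle C, ?_,
    hsum ▸ ciSup_finsum_mem_sub_finsum_mem_inter hnonneg hle⟩
  rw [Set.univ_inter, finsum_mem_univ, finsum_eq_sum_of_fintype, hsum]

/-- Finite-state error formula for the FSP scheme: for a conservative rate matrix `Q` and a
truncation `A`, the difference between the law and its FSP approximation (padded with zeros
outside `A`) on any set `C` is at most one minus the mass of the approximation, with equality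
at `C = Set.univ`; hence the total variation distance (the supremum over `C`) equals one minus
the mass of the approximation. -/
theorem matrix_fsp_error_formula {ι : Type*} [Fintype ι] [DecidableEq ι] [Nonempty ι]
    (Q : Matrix ι ι ℝ) (hMetzler : ∀ x y, x ≠ y → Q x y ≥ 0)
    (hrow : ∀ x, ∑ y, Q x y = 0) (A : Set ι) :
    ∀ t : ℝ, 0 ≤ t → ∀ x0 : ι,
      (∀ C : Set ι,
        (∑ᶠ y ∈ C, Matrix.exp ℝ (t • Q) x0 y) -
            (∑ᶠ y ∈ C ∩ A, Matrix.exp ℝ (t • Q.truncation A) x0 y) ≤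
          1 - ∑ᶠ y ∈ A, Matrix.exp ℝ (t • Q.truncation A) x0 y) ∧
      ((∑ᶠ y ∈ (Set.univ : Set ι), Matrix.exp ℝ (t • Q) x0 y) -
          (∑ᶠ y ∈ ((Set.univ : Set ι) ∩ A), Matrix.exp ℝ (t • Q.truncation A) x0 y) =
        1 - ∑ᶠ y ∈ A, Matrix.exp ℝ (t • Q.truncation A) x0 y) ∧
      ((⨆ C : Set ι,
          ((∑ᶠ y ∈ C, Matrix.exp ℝ (t • Q) x0 y) -
            (∑ᶠ y ∈ C ∩ A, Matrix.exp ℝ (t • Q.truncation A) x0 y))) =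
        1 - ∑ᶠ y ∈ A, Matrix.exp ℝ (t • Q.truncation A) x0 y) :=
  matrix_fsp_error_formula_general Q hMetzler hrow A
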